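/- Let q be a prime power, m ≥ 1, n ≥ 1, N = (q^m-q)/(q-1), and Q = F_q[x_1,...,x_n]/(x_1^{q^m},...,x_n^{q^m}). For 0 ≤ k' ≤ N, the polynomial a_{m,n,k'} := ∑ x_1^{i_1(q-1)} ··· x_n^{i_n(q-1)}, summed over all n-tuples (i_1,...,i_n) of nonnegative integers with i_1 + ... + i_n = (n-1)N + k' and each i_j ≤ N, is invariant under the action of GL_n(F_q) on Q. -/

import Mathlib

open MvPolynomial Finset

/-- The action of `g ∈ GL_n(F)` on `F[x_1,…,x_n]` by linear substitution of variables. -/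
noncomputable def glAct (F : Type) [Field F] (n : ℕ) (g : GL (Fin n) F) :
    MvPolynomial (Fin n) F →ₐ[F] MvPolynomial (Fin n) F :=
  MvPolynomial.aeval fun i => ∑ j, (g : Matrix (Fin n) (Fin n) F) i j • MvPolynomial.X j

/-- The ideal `(x_1^N, …, x_n^N)`. -/
noncomputable def frobIdeal (F : Type) [Field F] (n N : ℕ) :
    Ideal (MvPolynomial (Fin n) F) :=
  Ideal.span (Set.range fun i : Fin n => (MvPolynomial.X i : MvPolynomial (Fin n) F) ^ N)

/-- The element `a_{m,n,k'} = ∑ x_1^{i_1(q-1)} ⋯ x_n^{i_n(q-1)}`, summed over tuples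
with `i_1 + ⋯ + i_n = (n-1)N + k'` and each `i_j ≤ N`, where `N = (q^m-q)/(q-1)`. -/
noncomputable def aInv (F : Type) [Field F] (n q m k' : ℕ) : MvPolynomial (Fin n) F :=
  ∑ d ∈ (Fintype.piFinset fun _ : Fin n => Finset.range ((q ^ m - q) / (q - 1) + 1)) |>.filter
      (fun d => ∑ j, d j = (n - 1) * ((q ^ m - q) / (q - 1)) + k'),
    ∏ j, MvPolynomial.X j ^ (d j * (q - 1))

/-!
`GL_n(F_q)` is generated by diagonal matrices and transvections, and every linear substitution
preserves the ideal `(x_1^{q^m}, …, x_n^{q^m})` (Frobenius), so it suffices to treat the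
generators. With `f(x) = ∑_{i ≤ N} x^{i(q-1)} T^i`, `a_{m,n,k'}` is the coefficient of
`T^{(n-1)N+k'}` in `∏_j f(x_j)`. A diagonal matrix fixes each `f(x_j)`, as `c^{q-1} = 1`.
The transvection `x_s ↦ x_s + c x_t` only changes the factor `f(x_s) f(x_t)`, and since the
other factors have `T`-degree at most `(n-2)N`, only its coefficients of `T^{N+κ}` matter.
Their change `Δ` is homogeneous in `x_s, x_t`; setting `x_t = 1`, the geometric sum and the
invariance of `Y^q - Y` under `Y ↦ Y + c` give `Δ(Y,1) (Y^q - Y) = c + Y^e - (Y+c)^e` with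
`e = κ(q-1)+1`. So `Δ(Y,1)` has degree `< e - q`, which says that every monomial of `Δ` has
`x_t`-exponent at least `q^m`.
-/

section TruncGeom

variable {R : Type*} [CommSemiring R] (N w : ℕ)

noncomputable def truncGeom (x : R) : Polynomial R :=
  ∑ i ∈ range (N + 1), Polynomial.C (x ^ (i * w)) * Polynomial.X ^ i

lemma coeff_truncGeom (x : R) (i : ℕ) :
    (truncGeom N w x).coeff i = if i ≤ N then x ^ (i * w) else 0 := by
  simp only [truncGeom, Polynomial.finsetSum_coeff, Polynomial.coeff_C_mul_X_pow, sum_ite_eq,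
    mem_range, Nat.lt_succ_iff]

lemma natDegree_truncGeom_le (x : R) : (truncGeom N w x).natDegree ≤ N :=
  Polynomial.natDegree_sum_le_of_forall_le _ _ fun _ hi =>
    (Polynomial.natDegree_C_mul_X_pow_le _ _).trans (Nat.lt_succ_iff.mp (mem_range.mp hi))

lemma natDegree_prod_truncGeom_le {ι : Type*} (s : Finset ι) (x : ι → R) :
    (∏ j ∈ s, truncGeom N w (x j)).natDegree ≤ #s * N := by
  refine (Polynomial.natDegree_prod_le _ _).trans ?_
  simpa using Finset.sum_le_sum fun j (_ : j ∈ s) => natDegree_truncGeom_le N w (x j)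

lemma map_truncGeom {S : Type*} [CommSemiring S] (φ : R →+* S) (x : R) :
    (truncGeom N w x).map φ = truncGeom N w (φ x) := by
  simp [truncGeom, Polynomial.map_sum]

lemma truncGeom_mul_left {c : R} (hc : c ^ w = 1) (x : R) :
    truncGeom N w (c * x) = truncGeom N w x := by
  simp only [truncGeom, mul_pow, mul_comm _ w, pow_mul, hc, one_mul]

lemma coeff_prod_truncGeom {ι : Type*} [Fintype ι] [DecidableEq ι] (x : ι → R) (K : ℕ) :
    (∏ j, truncGeom N w (x j)).coeff K =
      ∑ d ∈ (Fintype.piFinset fun _ : ι => range (N + 1)) |>.filter (fun d => ∑ j, d j = K),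
        ∏ j, x j ^ (d j * w) := by
  simp only [truncGeom, prod_univ_sum, prod_mul_distrib, ← map_prod, prod_pow_eq_pow_sum,
    Polynomial.finsetSum_coeff, Polynomial.coeff_C_mul_X_pow, sum_filter, eq_comm]

lemma coeff_truncGeom_mul_truncGeom (κ : ℕ) (x y : R) :
    (truncGeom N w x * truncGeom N w y).coeff (N + κ) =
      ∑ i ∈ Icc κ N, x ^ (i * w) * y ^ ((N + κ - i) * w) := by
  rw [Polynomial.coeff_mul, Finset.Nat.sum_antidiagonal_eq_sum_range_succ_mk]
  simp only [coeff_truncGeom, ite_mul, zero_mul, mul_ite, mul_zero, ← ite_and]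
  rw [← sum_filter]
  refine sum_congr (by ext i; simp only [mem_filter, mem_range, mem_Icc]; omega) fun i _ => rfl

end TruncGeom

lemma coeff_mul_mem_of_natDegree_le {R : Type*} [CommSemiring R] {I : Ideal R}
    {g h : Polynomial R} {A B K : ℕ} (hg : g.natDegree ≤ A) (hh : ∀ b, B ≤ b → h.coeff b ∈ I)
    (hK : A + B ≤ K) : (g * h).coeff K ∈ I := by
  rw [Polynomial.coeff_mul]
  refine I.sum_mem fun ab hab => ?_
  rw [HasAntidiagonal.mem_antidiagonal] at hab
  by_cases ha : ab.1 ≤ A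
  · exact I.mul_mem_left _ (hh _ (by omega))
  · rw [Polynomial.coeff_eq_zero_of_natDegree_lt (by omega), zero_mul]
    exact I.zero_mem

lemma geom_sum_Icc_pow_mul {R : Type*} [CommRing R] (z : R) {κ N : ℕ} (h : κ ≤ N + 1) (w : ℕ) :
    (∑ i ∈ Icc κ N, z ^ (i * w)) * (z ^ (w + 1) - z) = z ^ ((N + 1) * w + 1) - z ^ (κ * w + 1) := by
  have h := geom_sum_Ico_mul (z ^ w) h
  simp only [← pow_mul, mul_comm w] at h
  rw [← Finset.Ico_add_one_right_eq_Icc, pow_succ, pow_succ, pow_succ, ← sub_mul, ← h]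
  ring

section FiniteField

variable (F : Type*) [Field F] [Fintype F]

lemma add_pow_card_pow {A : Type*} [CommSemiring A] [CharP A (ringChar F)] (x y : A) (m : ℕ) :
    (x + y) ^ Fintype.card F ^ m = x ^ Fintype.card F ^ m + y ^ Fintype.card F ^ m := by
  obtain ⟨k, hp, hk⟩ := FiniteField.card F (ringChar F)
  have := Fact.mk hp
  rw [hk, ← pow_mul]
  exact add_pow_char_pow x y _ _

lemma sum_pow_card_pow {A : Type*} [CommSemiring A] [CharP A (ringChar F)] {ι : Type*}
    (s : Finset ι) (f : ι → A) (m : ℕ) :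
    (∑ i ∈ s, f i) ^ Fintype.card F ^ m = ∑ i ∈ s, f i ^ Fintype.card F ^ m := by
  obtain ⟨k, hp, hk⟩ := FiniteField.card F (ringChar F)
  have := Fact.mk hp
  rw [hk, ← pow_mul]
  exact sum_pow_char_pow _ _ s f

variable {F}

local notation "q" => Fintype.card F
local notation "Y" => (Polynomial.X : Polynomial F)

omit [Fintype F] in
lemma natDegree_C_add_X_pow_sub_X_add_C_pow_lt (c : F) {e : ℕ} (he : 0 < e) :
    (Polynomial.C c + Y ^ e - (Y + Polynomial.C c) ^ e).natDegree < e := by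
  suffices h : (Polynomial.C c + Y ^ e - (Y + Polynomial.C c) ^ e).natDegree ≤ e - 1 by omega
  refine Polynomial.natDegree_le_iff_coeff_eq_zero.mpr fun b hb => ?_
  simp only [Polynomial.coeff_sub, Polynomial.coeff_add, Polynomial.coeff_C, Polynomial.coeff_X_pow,
    Polynomial.coeff_X_add_C_pow, if_neg (show b ≠ 0 by omega)]
  rcases (show b = e ∨ e < b by omega) with rfl | hlt
  · simp
  · simp [hlt.ne', Nat.choose_eq_zero_of_lt hlt]

lemma coeff_sum_X_add_C_pow_sub_sum_X_pow_eq_zero (c : F) {N κ m : ℕ}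
    (hN : (N + 1) * (q - 1) + 1 = q ^ m) (hκ : κ ≤ N) {a : ℕ} (ha : κ * (q - 1) < a + q) :
    (∑ i ∈ Icc κ N, (Y + Polynomial.C c) ^ (i * (q - 1)) -
      ∑ i ∈ Icc κ N, Y ^ (i * (q - 1))).coeff a = 0 := by
  have hq : 1 < q := Fintype.one_lt_card
  set Δ := ∑ i ∈ Icc κ N, (Y + Polynomial.C c) ^ (i * (q - 1)) - ∑ i ∈ Icc κ N, Y ^ (i * (q - 1))
  have hq1 : q - 1 + 1 = q := by omega
  have hshift : (Y + Polynomial.C c) ^ q - (Y + Polynomial.C c) = Y ^ q - Y := by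
    rw [← pow_one q, add_pow_card_pow, ← Polynomial.C_pow, FiniteField.pow_card_pow]
    ring
  have hmul : Δ * (Y ^ q - Y) = Polynomial.C c + Y ^ (κ * (q - 1) + 1) -
      (Y + Polynomial.C c) ^ (κ * (q - 1) + 1) := by
    have hgeom (z : Polynomial F) : (∑ i ∈ Icc κ N, z ^ (i * (q - 1))) * (z ^ q - z) =
        z ^ q ^ m - z ^ (κ * (q - 1) + 1) := by
      rw [← hN, ← geom_sum_Icc_pow_mul z (by omega), hq1]
    rw [sub_mul, ← hshift, hgeom, hshift, hgeom, add_pow_card_pow, ← Polynomial.C_pow,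
      FiniteField.pow_card_pow]
    ring
  by_cases hΔ : Δ = 0
  · rw [hΔ, Polynomial.coeff_zero]
  refine Polynomial.coeff_eq_zero_of_natDegree_lt ?_
  have hdeg := natDegree_C_add_X_pow_sub_X_add_C_pow_lt c (Nat.succ_pos (κ * (q - 1)))
  rw [← hmul, Polynomial.natDegree_mul hΔ (FiniteField.X_pow_card_sub_X_ne_zero F hq),
    FiniteField.X_pow_card_sub_X_natDegree_eq F hq] at hdeg
  omega

end FiniteField

lemma coeff_eq_coeff_aeval_of_isHomogeneous {R : Type*} [CommSemiring R]
    {p : MvPolynomial (Fin 2) R} {D : ℕ} (hp : p.IsHomogeneous D) {d : Fin 2 →₀ ℕ}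
    (hd : d 0 + d 1 = D) : p.coeff d = (aeval ![Polynomial.X, 1] p).coeff (d 0) := by
  rw [aeval_eq_eval₂Hom, coe_eval₂Hom, eval₂_eq', Polynomial.finsetSum_coeff]
  simp only [Fin.prod_univ_two, Matrix.cons_val_zero, Matrix.cons_val_one, one_pow, mul_one,
    Polynomial.algebraMap_apply, Algebra.algebraMap_self, RingHom.id_apply,
    Polynomial.coeff_C_mul_X_pow]
  rw [sum_eq_single d (fun d' hd' hne => if_neg fun h0 => hne ?_) (fun hd => by simp_all)]
  · simp
  have hdeg := hp.degree_eq_sum_deg_support hd'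
  rw [← Finsupp.degree_apply, Finsupp.degree_eq_sum, Fin.sum_univ_two] at hdeg
  ext i
  fin_cases i <;> simp <;> omega

section FrobIdeal

variable {F : Type} [Field F]

lemma mem_frobIdeal_iff {n Q : ℕ} {p : MvPolynomial (Fin n) F} :
    p ∈ frobIdeal F n Q ↔ ∀ d ∈ p.support, ∃ i, Q ≤ d i := by
  have h : frobIdeal F n Q = Ideal.span
      ((fun d => monomial d (1 : F)) '' Set.range fun i => Finsupp.single i Q) := by
    rw [frobIdeal, ← Set.range_comp]
    simp only [Function.comp_def, X_pow_eq_monomial]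
  simp [h, mem_ideal_span_monomial_image, Finsupp.single_le_iff]

lemma map_mem_frobIdeal {k n Q : ℕ} (φ : MvPolynomial (Fin k) F →+* MvPolynomial (Fin n) F)
    (hφ : ∀ i, φ (X i ^ Q) ∈ frobIdeal F n Q) {p : MvPolynomial (Fin k) F}
    (hp : p ∈ frobIdeal F k Q) : φ p ∈ frobIdeal F n Q :=
  (Ideal.span_le (I := (frobIdeal F n Q).comap φ)).mpr (by rintro _ ⟨i, rfl⟩; exact hφ i) hp

lemma mem_frobIdeal_of_isHomogeneous {p : MvPolynomial (Fin 2) F} {D Q : ℕ}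
    (hp : p.IsHomogeneous D)
    (hcoeff : ∀ a, D < a + Q → (aeval ![(Polynomial.X : Polynomial F), 1] p).coeff a = 0) :
    p ∈ frobIdeal F 2 Q := by
  refine mem_frobIdeal_iff.mpr fun d hd => ?_
  by_contra! hlt
  have hdeg := hp.degree_eq_sum_deg_support hd
  rw [← Finsupp.degree_apply, Finsupp.degree_eq_sum, Fin.sum_univ_two] at hdeg
  refine mem_support_iff.mp hd ?_
  rw [coeff_eq_coeff_aeval_of_isHomogeneous hp hdeg.symm]
  exact hcoeff _ (by have := hlt 1; omega)

end FrobIdeal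

section TwoVariables

variable {F : Type} [Field F] [Fintype F]

local notation "q" => Fintype.card F

lemma coeff_truncGeom_transvection_mem_frobIdeal (c : F) {N m : ℕ}
    (hN : (N + 1) * (q - 1) + 1 = q ^ m) {b : ℕ} (hb : N ≤ b) :
    ((truncGeom N (q - 1) (X 0 + C c * X 1) - truncGeom N (q - 1) (X 0)) *
      truncGeom N (q - 1) (X 1 : MvPolynomial (Fin 2) F)).coeff b ∈ frobIdeal F 2 (q ^ m) := by
  obtain ⟨κ, rfl⟩ := Nat.exists_eq_add_of_le hb
  rw [sub_mul, Polynomial.coeff_sub, coeff_truncGeom_mul_truncGeom,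
    coeff_truncGeom_mul_truncGeom, ← sum_sub_distrib]
  rcases lt_or_ge N κ with hκ | hκ
  · rw [Icc_eq_empty (by omega), sum_empty]
    exact zero_mem _
  set Δ := ∑ i ∈ Icc κ N, ((X 0 + C c * X 1) ^ (i * (q - 1)) * X 1 ^ ((N + κ - i) * (q - 1)) -
    X 0 ^ (i * (q - 1)) * (X 1 : MvPolynomial (Fin 2) F) ^ ((N + κ - i) * (q - 1)))
  have hhom : Δ.IsHomogeneous ((N + κ) * (q - 1)) := by
    refine IsHomogeneous.sum _ _ _ fun i hi => ?_
    have hdeg : (N + κ) * (q - 1) = 1 * (i * (q - 1)) + 1 * ((N + κ - i) * (q - 1)) := by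
      rw [one_mul, one_mul, ← add_mul]
      congr 1
      have := (mem_Icc.mp hi).2
      omega
    rw [hdeg]
    exact ((((isHomogeneous_X F 0).add (isHomogeneous_C_mul_X c 1)).pow _).mul
      ((isHomogeneous_X F 1).pow _)).sub (((isHomogeneous_X F 0).pow _).mul
      ((isHomogeneous_X F 1).pow _))
  have hdehom : aeval ![Polynomial.X, 1] Δ =
      ∑ i ∈ Icc κ N, (Polynomial.X + Polynomial.C c) ^ (i * (q - 1)) -
        ∑ i ∈ Icc κ N, Polynomial.X ^ (i * (q - 1)) := by
    simp [Δ]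
  refine mem_frobIdeal_of_isHomogeneous hhom fun a ha => ?_
  rw [hdehom]
  refine coeff_sum_X_add_C_pow_sub_sum_X_pow_eq_zero c hN hκ ?_
  have hq : q - 1 + 1 = q := Nat.sub_add_cancel Fintype.card_pos
  rw [add_mul] at ha hN
  linarith

end TwoVariables

lemma pow_sub_div_sub_one_succ_mul_add_one {q m : ℕ} (hq : 1 ≤ q) (hm : 1 ≤ m) :
    ((q ^ m - q) / (q - 1) + 1) * (q - 1) + 1 = q ^ m := by
  have hqm : q ≤ q ^ m := Nat.le_self_pow (by omega) q
  have hdvd : q - 1 ∣ q ^ m - q := by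
    have h := Nat.dvd_sub (Nat.sub_dvd_pow_sub_pow q 1 m) (dvd_refl (q - 1))
    rwa [one_pow, show q ^ m - 1 - (q - 1) = q ^ m - q by omega] at h
  rw [add_mul, Nat.div_mul_cancel hdvd]
  omega

section MatrixSubst

variable {F : Type} [Field F] {n : ℕ}

noncomputable def matrixSubst (M : Matrix (Fin n) (Fin n) F) :
    MvPolynomial (Fin n) F →ₐ[F] MvPolynomial (Fin n) F :=
  aeval fun i => ∑ j, M i j • X j

lemma matrixSubst_X (M : Matrix (Fin n) (Fin n) F) (i : Fin n) :
    matrixSubst M (X i) = ∑ j, M i j • X j :=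
  aeval_X _ i

lemma matrixSubst_mul (A B : Matrix (Fin n) (Fin n) F) :
    matrixSubst (A * B) = (matrixSubst B).comp (matrixSubst A) := by
  refine algHom_ext fun i => ?_
  simp only [AlgHom.comp_apply, matrixSubst_X, map_sum, map_smul, Matrix.mul_apply, sum_smul,
    smul_sum, smul_smul]
  exact sum_comm

lemma matrixSubst_diagonal_X (d : Fin n → F) (i : Fin n) :
    matrixSubst (Matrix.diagonal d) (X i) = C (d i) * X i := by
  simp [matrixSubst_X, Matrix.diagonal_apply, ite_smul, smul_eq_C_mul]

lemma matrixSubst_transvection_X (s t : Fin n) (c : F) (i : Fin n) :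
    matrixSubst (Matrix.transvection s t c) (X i) =
      if i = s then X s + C c * X t else X i := by
  simp only [Matrix.transvection, matrixSubst_X, Matrix.add_apply, Matrix.one_apply,
    Matrix.single_apply, add_smul, ite_smul, one_smul, zero_smul, smul_eq_C_mul, sum_add_distrib,
    sum_ite_eq, mem_univ, ↓reduceIte]
  by_cases h : i = s
  · simp [h]
  · simp [h, Ne.symm h]

lemma matrixSubst_mem_frobIdeal [Fintype F] (M : Matrix (Fin n) (Fin n) F) (m : ℕ)
    {p : MvPolynomial (Fin n) F} (hp : p ∈ frobIdeal F n (Fintype.card F ^ m)) :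
    matrixSubst M p ∈ frobIdeal F n (Fintype.card F ^ m) := by
  refine map_mem_frobIdeal (matrixSubst M).toRingHom (fun i => ?_) hp
  simp only [AlgHom.toRingHom_eq_coe, RingHom.coe_coe, map_pow, matrixSubst_X, sum_pow_card_pow,
    smul_eq_C_mul, mul_pow]
  exact Ideal.sum_mem _ fun j _ => Ideal.mul_mem_left _ _ (Ideal.subset_span ⟨j, rfl⟩)

lemma matrixSubst_mul_sub_mem [Fintype F] {A B : Matrix (Fin n) (Fin n) F} {m : ℕ}
    {p : MvPolynomial (Fin n) F} (hA : matrixSubst A p - p ∈ frobIdeal F n (Fintype.card F ^ m))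
    (hB : matrixSubst B p - p ∈ frobIdeal F n (Fintype.card F ^ m)) :
    matrixSubst (A * B) p - p ∈ frobIdeal F n (Fintype.card F ^ m) := by
  have h : matrixSubst (A * B) p - p =
      matrixSubst B (matrixSubst A p - p) + (matrixSubst B p - p) := by
    rw [matrixSubst_mul, AlgHom.comp_apply, map_sub]
    ring
  rw [h]
  exact add_mem (matrixSubst_mem_frobIdeal B m hA) hB

lemma aInv_eq_coeff_prod_truncGeom (q m k' : ℕ) :
    aInv F n q m k' = (∏ j, truncGeom ((q ^ m - q) / (q - 1)) (q - 1) (X j)).coeff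
      ((n - 1) * ((q ^ m - q) / (q - 1)) + k') :=
  (coeff_prod_truncGeom _ _ _ _).symm

lemma map_aInv {S : Type*} [CommSemiring S] (φ : MvPolynomial (Fin n) F →+* S) (q m k' : ℕ) :
    φ (aInv F n q m k') = (∏ j, truncGeom ((q ^ m - q) / (q - 1)) (q - 1) (φ (X j))).coeff
      ((n - 1) * ((q ^ m - q) / (q - 1)) + k') := by
  rw [aInv_eq_coeff_prod_truncGeom, ← Polynomial.coeff_map, Polynomial.map_prod]
  simp only [map_truncGeom]

lemma matrixSubst_diagonal_aInv [Fintype F] {d : Fin n → F} (hd : ∀ i, d i ≠ 0) (m k' : ℕ) :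
    matrixSubst (Matrix.diagonal d) (aInv F n (Fintype.card F) m k') =
      aInv F n (Fintype.card F) m k' := by
  have hd' (j : Fin n) : (C (d j) : MvPolynomial (Fin n) F) ^ (Fintype.card F - 1) = 1 := by
    rw [← C_pow, FiniteField.pow_card_sub_one_eq_one _ (hd j), C_1]
  rw [← AlgHom.coe_toRingHom, map_aInv, aInv_eq_coeff_prod_truncGeom]
  simp only [RingHom.coe_coe, matrixSubst_diagonal_X, truncGeom_mul_left _ _ (hd' _)]

lemma coeff_truncGeom_X_add_C_mul_X_mem_frobIdeal [Fintype F] (s t : Fin n) (c : F) {N m : ℕ}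
    (hN : (N + 1) * (Fintype.card F - 1) + 1 = Fintype.card F ^ m) {b : ℕ} (hb : N ≤ b) :
    ((truncGeom N (Fintype.card F - 1) (X s + C c * X t) -
        truncGeom N (Fintype.card F - 1) (X s)) * truncGeom N (Fintype.card F - 1) (X t)).coeff b
      ∈ frobIdeal F n (Fintype.card F ^ m) := by
  set q := Fintype.card F
  have hmap : (truncGeom N (q - 1) (X s + C c * X t) - truncGeom N (q - 1) (X s)) *
      truncGeom N (q - 1) (X t) = ((truncGeom N (q - 1) (X 0 + C c * X 1) -
        truncGeom N (q - 1) (X 0)) * truncGeom N (q - 1) (X 1 : MvPolynomial (Fin 2) F)).map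
          (rename ![s, t]).toRingHom := by
    simp [Polynomial.map_mul, Polynomial.map_sub, map_truncGeom]
  rw [hmap, Polynomial.coeff_map]
  refine map_mem_frobIdeal _ (fun i => ?_) (coeff_truncGeom_transvection_mem_frobIdeal c hN hb)
  simp only [AlgHom.toRingHom_eq_coe, RingHom.coe_coe, map_pow, rename_X]
  exact Ideal.subset_span ⟨_, rfl⟩

lemma matrixSubst_transvection_aInv_sub_mem [Fintype F] {s t : Fin n} (hst : s ≠ t) (c : F)
    {m : ℕ} (hm : 1 ≤ m) (k' : ℕ) :
    matrixSubst (Matrix.transvection s t c) (aInv F n (Fintype.card F) m k') -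
      aInv F n (Fintype.card F) m k' ∈ frobIdeal F n (Fintype.card F ^ m) := by
  set q := Fintype.card F
  set N := (q ^ m - q) / (q - 1)
  set rest := (univ.erase s).erase t
  have ht : t ∈ univ.erase s := mem_erase.mpr ⟨hst.symm, mem_univ t⟩
  have hsplit (x : Fin n → MvPolynomial (Fin n) F) : ∏ j, truncGeom N (q - 1) (x j) =
      (∏ j ∈ rest, truncGeom N (q - 1) (x j)) *
        (truncGeom N (q - 1) (x s) * truncGeom N (q - 1) (x t)) := by
    rw [← mul_prod_erase _ _ (mem_univ s), ← mul_prod_erase _ _ ht]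
    ring
  have hrest : ∏ j ∈ rest, truncGeom N (q - 1) (matrixSubst (Matrix.transvection s t c) (X j)) =
      ∏ j ∈ rest, truncGeom N (q - 1) (X j) :=
    prod_congr rfl fun j hj => by
      rw [matrixSubst_transvection_X, if_neg (ne_of_mem_erase (mem_of_mem_erase hj))]
  rw [← AlgHom.coe_toRingHom, map_aInv, aInv_eq_coeff_prod_truncGeom, ← Polynomial.coeff_sub,
    hsplit, hsplit, RingHom.coe_coe, hrest, ← mul_sub]
  simp only [matrixSubst_transvection_X, if_pos, if_neg hst.symm, ← sub_mul]
  have hcard : #rest = n - 2 := by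
    rw [card_erase_of_mem ht, card_erase_of_mem (mem_univ s), card_univ, Fintype.card_fin]
    omega
  refine coeff_mul_mem_of_natDegree_le (natDegree_prod_truncGeom_le _ _ _ _)
    (fun _ hb => coeff_truncGeom_X_add_C_mul_X_mem_frobIdeal s t c
      (pow_sub_div_sub_one_succ_mul_add_one Fintype.card_pos hm) hb) ?_
  have h2 : 2 ≤ n := by
    have := Fin.val_ne_of_ne hst
    omega
  rw [hcard, ← add_one_mul, show n - 2 + 1 = n - 1 by omega]
  exact Nat.le_add_right _ _

end MatrixSubst

theorem statement11_general (F : Type) [Field F] [Fintype F] (q : ℕ) (hq : Fintype.card F = q)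
    (n : ℕ) (m : ℕ) (hm : 1 ≤ m)
    (k' : ℕ) (g : GL (Fin n) F) :
    Ideal.Quotient.mk (frobIdeal F n (q ^ m)) (glAct F n g (aInv F n q m k'))
      = Ideal.Quotient.mk (frobIdeal F n (q ^ m)) (aInv F n q m k') := by
  subst hq
  rw [Ideal.Quotient.eq]
  show matrixSubst (g : Matrix (Fin n) (Fin n) F) (aInv F n _ m k') - aInv F n _ m k' ∈
    frobIdeal F n _
  refine Matrix.diagonal_transvection_induction_of_det_ne_zero
    (fun M => matrixSubst M (aInv F n _ m k') - aInv F n _ m k' ∈ frobIdeal F n _) g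
    g.det_ne_zero (fun d hd => ?_) (fun ⟨s, t, hst, c⟩ => ?_)
    (fun _ _ _ _ => matrixSubst_mul_sub_mem)
  · rw [Matrix.det_diagonal, prod_ne_zero_iff] at hd
    rw [matrixSubst_diagonal_aInv fun i => hd i (mem_univ i), sub_self]
    exact zero_mem _
  · exact matrixSubst_transvection_aInv_sub_mem hst c hm k'

/-- for `0 ≤ k' ≤ N = (q^m-q)/(q-1)`, the element `a_{m,n,k'}` of
`Q = F_q[x_1,…,x_n]/(x_1^{q^m},…,x_n^{q^m})` is `GL_n(F_q)`-invariant. -/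
theorem statement11 (F : Type) [Field F] [Fintype F] (q : ℕ) (hq : Fintype.card F = q)
    (n : ℕ) (hn : 1 ≤ n) (m : ℕ) (hm : 1 ≤ m)
    (k' : ℕ) (hk' : k' ≤ (q ^ m - q) / (q - 1)) (g : GL (Fin n) F) :
    Ideal.Quotient.mk (frobIdeal F n (q ^ m)) (glAct F n g (aInv F n q m k'))
      = Ideal.Quotient.mk (frobIdeal F n (q ^ m)) (aInv F n q m k') :=
  statement11_general F q hq n m hm k' g
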